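/- arXiv:1802.09794 — 2 statements merged into one kernel-verified Lean document; each statement's English description precedes it below -/
import Mathlib

section
/- Consider the optimization problem min_k ‖y − Φk‖₂² + λ²‖D₁k‖₂² over k ∈ ℝ^{TK}, where Φ is block diagonal with blocks Φ_t ∈ ℝ^{n×K} and D₁ is the block first-difference operator. For every λ > 0, the problem has a unique minimizer if and only if ∑_{t=1}^T Φ_tᵀΦ_t is positive definite (equivalently, the corresponding LTI least-squares problem has a unique solution). -/
/-!
The objective is `‖b - A k‖²` for the stacked operator `A k = (Φₜ kₜ, λ D₁ k)` and `b = (y, 0)`.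
The minimizers of a least-squares objective are exactly the preimages under `A` of the orthogonal
projection of `b` onto `range A`, so the minimizer is unique iff `A` is injective. As `λ ≠ 0`,
`ker A` consists of the constant sequences `c` with `Φₜ c = 0` for all `t`; this is trivial iff
`∑ₜ Φₜᵀ Φₜ` is positive definite, because `cᵀ (∑ₜ Φₜᵀ Φₜ) c = ∑ₜ ‖Φₜ c‖²`.
-/

open Matrix

section LeastSquares

variable {𝕜 E F : Type*} [RCLike 𝕜] [AddCommGroup E] [Module 𝕜 E]
  [NormedAddCommGroup F] [InnerProductSpace 𝕜 F]

theorem Submodule.norm_sub_sq_eq_norm_sub_starProjection_sq_add (K : Submodule 𝕜 F)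
    [K.HasOrthogonalProjection] (b : F) {w : F} (hw : w ∈ K) :
    ‖b - w‖ ^ 2 = ‖b - K.starProjection b‖ ^ 2 + ‖K.starProjection b - w‖ ^ 2 := by
  rw [sq, sq, sq, ← norm_add_sq_eq_norm_sq_add_norm_sq_of_inner_eq_zero _ _
    (K.starProjection_inner_eq_zero b _ (K.sub_mem (K.starProjection_apply_mem b) hw)),
    sub_add_sub_cancel]

theorem LinearMap.forall_norm_sub_sq_le_iff (A : E →ₗ[𝕜] F)
    [(LinearMap.range A).HasOrthogonalProjection] (b : F) (x : E) :
    (∀ z, ‖b - A x‖ ^ 2 ≤ ‖b - A z‖ ^ 2) ↔ A x = (LinearMap.range A).starProjection b := by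
  set K := LinearMap.range A
  have pythagoras (z : E) := K.norm_sub_sq_eq_norm_sub_starProjection_sq_add b
    (LinearMap.mem_range_self A z)
  constructor
  · intro hmin
    obtain ⟨z, hz⟩ := LinearMap.mem_range.mp (K.starProjection_apply_mem b)
    have hle := hmin z
    rw [pythagoras x, pythagoras z, hz, sub_self, norm_zero] at hle
    have hdist : ‖K.starProjection b - A x‖ = 0 := by
      nlinarith [norm_nonneg (K.starProjection b - A x)]
    exact (sub_eq_zero.mp (norm_eq_zero.mp hdist)).symm
  · intro hx z
    rw [pythagoras x, pythagoras z, hx, sub_self, norm_zero]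
    nlinarith [norm_nonneg (K.starProjection b - A z)]

theorem LinearMap.existsUnique_forall_norm_sub_sq_le_iff_injective (A : E →ₗ[𝕜] F)
    [(LinearMap.range A).HasOrthogonalProjection] (b : F) :
    (∃! x, ∀ z, ‖b - A x‖ ^ 2 ≤ ‖b - A z‖ ^ 2) ↔ Function.Injective A := by
  simp only [A.forall_norm_sub_sq_le_iff]
  obtain ⟨x₀, hx₀⟩ := LinearMap.mem_range.mp ((LinearMap.range A).starProjection_apply_mem b)
  rw [← hx₀]
  constructor
  · rintro ⟨x, -, huniq⟩
    refine (injective_iff_map_eq_zero A).mpr fun v hv => ?_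
    have hshift : x₀ + v = x := huniq _ (by simp [hv])
    have hx : x₀ = x := huniq x₀ rfl
    simpa [← hx] using hshift
  · intro hA
    exact ⟨x₀, rfl, fun x hx => hA hx⟩

end LeastSquares

theorem Matrix.dotProduct_mulVec_sum_transpose_mul_self {ι m n : Type*} [Fintype ι] [Fintype m]
    [Fintype n] (Φ : ι → Matrix m n ℝ) (x : n → ℝ) :
    x ⬝ᵥ (∑ t, (Φ t)ᵀ * Φ t) *ᵥ x = ∑ t, (Φ t *ᵥ x) ⬝ᵥ (Φ t *ᵥ x) := by
  simp only [Matrix.sum_mulVec, dotProduct_sum, ← mulVec_mulVec, dotProduct_mulVec,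
    vecMul_transpose]

theorem Matrix.posDef_sum_transpose_mul_self_iff {ι m n : Type*} [Fintype ι] [Fintype m]
    [Fintype n] (Φ : ι → Matrix m n ℝ) :
    (∑ t, (Φ t)ᵀ * Φ t).PosDef ↔ ∀ x, (∀ t, Φ t *ᵥ x = 0) → x = 0 := by
  have hermitian : (∑ t, (Φ t)ᵀ * Φ t).IsHermitian :=
    (posSemidef_sum _ fun t _ => posSemidef_conjTranspose_mul_self (Φ t)).isHermitian
  have quad_pos_iff (x : n → ℝ) :
      0 < ∑ t, (Φ t *ᵥ x) ⬝ᵥ (Φ t *ᵥ x) ↔ ¬ ∀ t, Φ t *ᵥ x = 0 := by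
    have nonneg (v : m → ℝ) : 0 ≤ v ⬝ᵥ v := by simpa using dotProduct_star_self_nonneg v
    rw [(Finset.sum_nonneg fun t _ => nonneg _).lt_iff_ne', ne_eq,
      Finset.sum_eq_zero_iff_of_nonneg fun t _ => nonneg _]
    simp only [Finset.mem_univ, forall_const, dotProduct_self_eq_zero]
  rw [posDef_iff_dotProduct_mulVec]
  simp only [hermitian, true_and, star_trivial, dotProduct_mulVec_sum_transpose_mul_self,
    quad_pos_iff]
  exact ⟨fun h x => not_imp_not.mp (@h x), fun h x => not_imp_not.mpr (h x)⟩

def firstDiff {E : Type*} [Sub E] {T : ℕ} (k : Fin T → E) (s : Fin (T - 1)) : E :=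
  k ⟨s + 1, by have := s.2; omega⟩ - k ⟨s, by have := s.2; omega⟩

theorem firstDiff_eq_zero_iff {E : Type*} [AddGroup E] {T : ℕ} (k : Fin T → E) :
    firstDiff k = 0 ↔ ∃ c, k = Function.const _ c := by
  constructor
  · intro h
    cases T with
    | zero => exact ⟨0, Subsingleton.elim _ _⟩
    | succ m =>
      refine ⟨k 0, funext fun t => ?_⟩
      induction t using Fin.induction with
      | zero => rfl
      | succ i ih => exact (sub_eq_zero.mp (congrFun h ⟨i, i.2⟩)).trans ih
  · rintro ⟨c, rfl⟩
    funext s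
    exact sub_self c

theorem firstDiff_add {E : Type*} [AddCommGroup E] {T : ℕ} (k k' : Fin T → E) :
    firstDiff (k + k') = firstDiff k + firstDiff k' :=
  funext fun _ => add_sub_add_comm _ _ _ _

theorem firstDiff_smul {R E : Type*} [Monoid R] [AddGroup E] [DistribMulAction R E] {T : ℕ}
    (c : R) (k : Fin T → E) : firstDiff (c • k) = c • firstDiff k :=
  funext fun _ => (smul_sub _ _ _).symm

section RegularizedDesign

variable {T n K : ℕ}

/-- The paper's stacked operator `[Φ; λ D₁]`, flattened into a single Euclidean space. -/
noncomputable def regularizedDesign (Φ : Fin T → Matrix (Fin n) (Fin K) ℝ) (lam : ℝ) :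
    (Fin T → Fin K → ℝ) →ₗ[ℝ] EuclideanSpace ℝ (Fin T × Fin n ⊕ Fin (T - 1) × Fin K) where
  toFun k := WithLp.toLp 2 <|
    Sum.elim (fun p => (Φ p.1 *ᵥ k p.1) p.2) fun p => lam * firstDiff k p.1 p.2
  map_add' k k' := by
    ext (p | p) <;> simp [firstDiff_add, mulVec_add, mul_add]
  map_smul' c k := by
    ext (p | p) <;> simp [firstDiff_smul, mulVec_smul, mul_left_comm]

def regularizedTarget (y : Fin T → Fin n → ℝ) :
    EuclideanSpace ℝ (Fin T × Fin n ⊕ Fin (T - 1) × Fin K) :=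
  WithLp.toLp 2 <| Sum.elim (fun p => y p.1 p.2) 0

theorem sum_residual_add_firstDiff_eq_norm_sq (Φ : Fin T → Matrix (Fin n) (Fin K) ℝ)
    (y : Fin T → Fin n → ℝ) (lam : ℝ) (k : Fin T → Fin K → ℝ) :
    (∑ t, (y t - Φ t *ᵥ k t) ⬝ᵥ (y t - Φ t *ᵥ k t)) +
        lam ^ 2 * ∑ s, firstDiff k s ⬝ᵥ firstDiff k s =
      ‖regularizedTarget y - regularizedDesign Φ lam k‖ ^ 2 := by
  rw [EuclideanSpace.norm_sq_eq]
  simp [Fintype.sum_sum_type, Fintype.sum_prod_type, dotProduct,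
    Finset.mul_sum, regularizedTarget, regularizedDesign, sq, mul_mul_mul_comm]

theorem regularizedDesign_eq_zero_iff (Φ : Fin T → Matrix (Fin n) (Fin K) ℝ) {lam : ℝ}
    (hlam : lam ≠ 0) (k : Fin T → Fin K → ℝ) :
    regularizedDesign Φ lam k = 0 ↔ (∀ t, Φ t *ᵥ k t = 0) ∧ firstDiff k = 0 := by
  simp [regularizedDesign, funext_iff, hlam]

theorem regularizedDesign_injective_iff (Φ : Fin T → Matrix (Fin n) (Fin K) ℝ) {lam : ℝ}
    (hT : 0 < T) (hlam : lam ≠ 0) :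
    Function.Injective (regularizedDesign Φ lam) ↔ ∀ c, (∀ t, Φ t *ᵥ c = 0) → c = 0 := by
  simp only [injective_iff_map_eq_zero, regularizedDesign_eq_zero_iff Φ hlam,
    firstDiff_eq_zero_iff]
  constructor
  · intro h c hc
    exact congrFun (h (Function.const _ c) ⟨hc, c, rfl⟩) ⟨0, hT⟩
  · rintro h k ⟨hk, c, rfl⟩
    rw [h c hk]
    rfl

end RegularizedDesign

/-- The first-difference-regularized LTV least-squares problem has a unique minimizer
for every `λ > 0` iff `∑ₜ Φₜᵀ Φₜ` is positive definite (i.e., the LTI problem is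
well posed). -/
theorem stmt_11 {T n K : ℕ} (hT : 2 ≤ T)
    (Φ : Fin T → Matrix (Fin n) (Fin K) ℝ) (y : Fin T → Fin n → ℝ)
    (lam : ℝ) (hlam : 0 < lam) :
    (∃! kstar : Fin T → Fin K → ℝ,
      ∀ k : Fin T → Fin K → ℝ,
        (∑ t : Fin T, (y t - (Φ t).mulVec (kstar t)) ⬝ᵥ (y t - (Φ t).mulVec (kstar t))) +
          lam ^ 2 * ∑ t : Fin (T - 1),
            ((kstar ⟨t.1 + 1, by have := t.2; omega⟩ - kstar ⟨t.1, by have := t.2; omega⟩) ⬝ᵥ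
             (kstar ⟨t.1 + 1, by have := t.2; omega⟩ - kstar ⟨t.1, by have := t.2; omega⟩)) ≤
        (∑ t : Fin T, (y t - (Φ t).mulVec (k t)) ⬝ᵥ (y t - (Φ t).mulVec (k t))) +
          lam ^ 2 * ∑ t : Fin (T - 1),
            ((k ⟨t.1 + 1, by have := t.2; omega⟩ - k ⟨t.1, by have := t.2; omega⟩) ⬝ᵥ
             (k ⟨t.1 + 1, by have := t.2; omega⟩ - k ⟨t.1, by have := t.2; omega⟩))) ↔
    (∑ t : Fin T, (Φ t)ᵀ * Φ t).PosDef := by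
  rw [posDef_sum_transpose_mul_self_iff, ← regularizedDesign_injective_iff Φ (by omega) hlam.ne',
    ← (regularizedDesign Φ lam).existsUnique_forall_norm_sub_sq_le_iff_injective
      (regularizedTarget y)]
  simp only [← sum_residual_add_firstDiff_eq_norm_sq]
  rfl
end

section
/- Consider min_k ‖y − Φk‖₂² + λ²‖D₂k‖₂² with Φ block diagonal with blocks Φ_t and D₂ the block second-difference operator, T ≥ 3, λ > 0. The problem has a unique minimizer if and only if there is no nonzero pair (a,b) ∈ ℝᴷ × ℝᴷ with Φ_t(a + t·b) = 0 for all t = 1,…,T. -/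
/-!
The objective is `‖L k - c‖²` for the linear map `L k = ((Φₜ kₜ)ₜ, λ · D₂ k)` into a Euclidean
space. A least-squares problem has a unique solution exactly when `L` is injective: the orthogonal
projection of `c` onto `range L` always yields a solution, and adding a kernel element to a
solution gives another one. As `λ ≠ 0`, the kernel of `L` consists of the sequences annihilated by
every `Φₜ` whose second differences vanish, i.e. the affine sequences `kₜ = a + t • b`, and for
`T ≥ 2` such a sequence vanishes only when `a = b = 0`.
-/

open Matrix

section LeastSquares

variable {V E : Type*} [AddCommGroup V] [Module ℝ V]
  [NormedAddCommGroup E] [InnerProductSpace ℝ E] [FiniteDimensional ℝ E]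

theorem norm_sub_sq_eq_add_of_eq_starProjection (L : V →ₗ[ℝ] E) (c : E) {k₀ : V}
    (hk₀ : L k₀ = (LinearMap.range L).starProjection c) (k : V) :
    ‖L k - c‖ ^ 2 = ‖L k - L k₀‖ ^ 2 + ‖c - L k₀‖ ^ 2 := by
  have hperp : inner ℝ (L k - L k₀) (c - L k₀) = 0 := by
    rw [real_inner_comm, hk₀]
    exact (LinearMap.range L).starProjection_inner_eq_zero c _ ⟨k - k₀, by rw [map_sub, hk₀]⟩
  rw [show L k - c = (L k - L k₀) - (c - L k₀) by abel, norm_sub_sq_real, hperp]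
  ring

theorem existsUnique_leastSquares_iff_injective (L : V →ₗ[ℝ] E) (c : E) :
    (∃! k : V, ∀ k' : V, ‖L k - c‖ ^ 2 ≤ ‖L k' - c‖ ^ 2) ↔ Function.Injective L := by
  constructor
  · rintro ⟨k, hk, huniq⟩
    refine (injective_iff_map_eq_zero L).2 fun v hv => ?_
    have : k + v = k := huniq (k + v) (by simpa [hv] using hk)
    simpa using this
  · intro hL
    obtain ⟨k₀, hk₀⟩ := LinearMap.mem_range.1 ((LinearMap.range L).starProjection_apply_mem c)
    have hpyth := norm_sub_sq_eq_add_of_eq_starProjection L c hk₀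
    refine ⟨k₀, fun k => ?_, fun k hk => hL ?_⟩
    · rw [hpyth k, hpyth k₀, sub_self, norm_zero]
      nlinarith [sq_nonneg ‖L k - L k₀‖]
    · have hmin := hk k₀
      rw [hpyth k, hpyth k₀, sub_self, norm_zero] at hmin
      have hdist : ‖L k - L k₀‖ ^ 2 = 0 := le_antisymm (by linarith) (sq_nonneg _)
      simpa [sub_eq_zero] using hdist

end LeastSquares

section SecondDifference

variable {V : Type*} [AddCommGroup V] [Module ℝ V] {T : ℕ}

def secondDiff : (Fin T → V) →ₗ[ℝ] (Fin (T - 2) → V) where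
  toFun k s := k ⟨s + 2, by omega⟩ - (2 : ℝ) • k ⟨s + 1, by omega⟩ + k ⟨s, by omega⟩
  map_add' k k' := by
    ext s
    simp only [Pi.add_apply, smul_add]
    abel
  map_smul' c k := by
    ext s
    simp only [Pi.smul_apply, smul_add, smul_sub, smul_comm c (2 : ℝ), RingHom.id_apply]

theorem secondDiff_apply (k : Fin T → V) (s : Fin (T - 2)) :
    secondDiff k s = k ⟨s + 2, by omega⟩ - (2 : ℝ) • k ⟨s + 1, by omega⟩ + k ⟨s, by omega⟩ :=
  rfl

-- `t : Fin T` stands for the time `t + 1 ∈ {1, …, T}`.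
theorem secondDiff_affine (a b : V) :
    secondDiff (fun t : Fin T => a + (((t : ℕ) : ℝ) + 1) • b) = 0 := by
  ext s
  simp only [secondDiff_apply, Pi.zero_apply]
  push_cast
  module

theorem secondDiff_eq_zero_iff (hT : 2 ≤ T) (k : Fin T → V) :
    secondDiff k = 0 ↔ ∃ a b : V, k = fun t : Fin T => a + (((t : ℕ) : ℝ) + 1) • b := by
  refine ⟨fun h => ?_, by rintro ⟨a, b, rfl⟩; exact secondDiff_affine a b⟩
  set k₀ := k ⟨0, by omega⟩
  set k₁ := k ⟨1, by omega⟩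
  refine ⟨(2 : ℝ) • k₀ - k₁, k₁ - k₀, funext fun ⟨m, hm⟩ => ?_⟩
  induction m using Nat.strong_induction_on with
  | _ m ih =>
    match m, hm with
    | 0, _ => simp only [k₀, Nat.cast_zero]; module
    | 1, _ => simp only [k₁, Nat.cast_one]; module
    | s + 2, hm =>
      have hs := congrFun h ⟨s, by omega⟩
      have e₁ := ih (s + 1) (by omega) (by omega)
      have e₀ := ih s (by omega) (by omega)
      simp only [secondDiff_apply, Pi.zero_apply] at hs
      push_cast at e₁ e₀ ⊢
      linear_combination (norm := module) hs + (2 : ℝ) • e₁ - e₀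

theorem affine_eq_zero_iff (hT : 2 ≤ T) (a b : V) :
    (fun t : Fin T => a + (((t : ℕ) : ℝ) + 1) • b) = 0 ↔ a = 0 ∧ b = 0 := by
  refine ⟨fun h => ?_, by rintro ⟨rfl, rfl⟩; funext t; simp⟩
  have h₀ := congrFun h ⟨0, by omega⟩
  have h₁ := congrFun h ⟨1, by omega⟩
  simp only [Nat.cast_zero, Nat.cast_one, Pi.zero_apply] at h₀ h₁
  have hb : b = 0 := by linear_combination (norm := module) h₁ - h₀
  refine ⟨?_, hb⟩
  simpa [hb] using h₀

end SecondDifference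

section LTV

variable {T n K : ℕ}

def ltvObjective (Φ : Fin T → Matrix (Fin n) (Fin K) ℝ) (y : Fin T → Fin n → ℝ) (lam : ℝ)
    (k : Fin T → Fin K → ℝ) : ℝ :=
  (∑ t, (y t - Φ t *ᵥ k t) ⬝ᵥ (y t - Φ t *ᵥ k t)) +
    lam ^ 2 * ∑ s, secondDiff k s ⬝ᵥ secondDiff k s

abbrev LTVSpace (T n K : ℕ) := EuclideanSpace ℝ ((Fin T × Fin n) ⊕ (Fin (T - 2) × Fin K))

def ltvOperator (Φ : Fin T → Matrix (Fin n) (Fin K) ℝ) (lam : ℝ) :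
    (Fin T → Fin K → ℝ) →ₗ[ℝ] LTVSpace T n K where
  toFun k := WithLp.toLp 2 <| Sum.elim (fun p => (Φ p.1 *ᵥ k p.1) p.2)
    (fun q => lam * secondDiff k q.1 q.2)
  map_add' k k' := by
    ext (p | q)
    · simp [Matrix.mulVec_add]
    · simp [mul_add]
  map_smul' c k := by
    ext (p | q)
    · simp [Matrix.mulVec_smul]
    · simp [mul_left_comm]

def ltvTarget (y : Fin T → Fin n → ℝ) : LTVSpace T n K :=
  WithLp.toLp 2 <| Sum.elim (fun p => y p.1 p.2) 0

theorem ltvObjective_eq_norm_sq (Φ : Fin T → Matrix (Fin n) (Fin K) ℝ) (y : Fin T → Fin n → ℝ)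
    (lam : ℝ) (k : Fin T → Fin K → ℝ) :
    ltvObjective Φ y lam k = ‖ltvOperator Φ lam k - ltvTarget y‖ ^ 2 := by
  rw [EuclideanSpace.norm_sq_eq, Fintype.sum_sum_type]
  simp only [ltvObjective, ltvOperator, ltvTarget, LinearMap.coe_mk, AddHom.coe_mk,
    PiLp.sub_apply, Sum.elim_inl, Sum.elim_inr, Pi.zero_apply, Pi.sub_apply, sub_zero,
    Real.norm_eq_abs, sq_abs, Fintype.sum_prod_type, dotProduct, Finset.mul_sum]
  congr 1 <;> refine Finset.sum_congr rfl fun t _ => Finset.sum_congr rfl fun i _ => ?_ <;> ring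

theorem ltvOperator_eq_zero_iff (Φ : Fin T → Matrix (Fin n) (Fin K) ℝ) {lam : ℝ} (hlam : lam ≠ 0)
    (k : Fin T → Fin K → ℝ) :
    ltvOperator Φ lam k = 0 ↔ (∀ t, Φ t *ᵥ k t = 0) ∧ secondDiff k = 0 := by
  simp only [ltvOperator, LinearMap.coe_mk, AddHom.coe_mk, WithLp.ext_iff, funext_iff,
    Sum.forall, Prod.forall, Sum.elim_inl, Sum.elim_inr, PiLp.zero_apply, Pi.zero_apply,
    mul_eq_zero, hlam, false_or]

end LTV

/-- The second-difference-regularized LTV least-squares problem has a unique minimizer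
iff no nonzero affine-in-time parameter sequence `kₜ = a + t·b` is annihilated by all
regressor blocks `Φₜ`. -/
theorem stmt_12 {T n K : ℕ} (hT : 3 ≤ T)
    (Φ : Fin T → Matrix (Fin n) (Fin K) ℝ) (y : Fin T → Fin n → ℝ)
    (lam : ℝ) (hlam : 0 < lam) :
    (∃! kstar : Fin T → Fin K → ℝ,
      ∀ k : Fin T → Fin K → ℝ,
        (∑ t : Fin T, (y t - (Φ t).mulVec (kstar t)) ⬝ᵥ (y t - (Φ t).mulVec (kstar t))) +
          lam ^ 2 * ∑ t : Fin (T - 2),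
            ((kstar ⟨t.1 + 2, by have := t.2; omega⟩ -
                (2 : ℝ) • kstar ⟨t.1 + 1, by have := t.2; omega⟩ +
                kstar ⟨t.1, by have := t.2; omega⟩) ⬝ᵥ
             (kstar ⟨t.1 + 2, by have := t.2; omega⟩ -
                (2 : ℝ) • kstar ⟨t.1 + 1, by have := t.2; omega⟩ +
                kstar ⟨t.1, by have := t.2; omega⟩)) ≤
        (∑ t : Fin T, (y t - (Φ t).mulVec (k t)) ⬝ᵥ (y t - (Φ t).mulVec (k t))) +
          lam ^ 2 * ∑ t : Fin (T - 2),
            ((k ⟨t.1 + 2, by have := t.2; omega⟩ -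
                (2 : ℝ) • k ⟨t.1 + 1, by have := t.2; omega⟩ +
                k ⟨t.1, by have := t.2; omega⟩) ⬝ᵥ
             (k ⟨t.1 + 2, by have := t.2; omega⟩ -
                (2 : ℝ) • k ⟨t.1 + 1, by have := t.2; omega⟩ +
                k ⟨t.1, by have := t.2; omega⟩))) ↔
    (∀ a b : Fin K → ℝ,
      (∀ t : Fin T, (Φ t).mulVec (a + ((t.1 : ℝ) + 1) • b) = 0) → a = 0 ∧ b = 0) := by
  change (∃! kstar, ∀ k, ltvObjective Φ y lam kstar ≤ ltvObjective Φ y lam k) ↔ _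
  simp only [ltvObjective_eq_norm_sq]
  rw [existsUnique_leastSquares_iff_injective, injective_iff_map_eq_zero]
  have hT2 : 2 ≤ T := by omega
  constructor
  · intro h a b hab
    rw [← affine_eq_zero_iff hT2]
    exact h _ ((ltvOperator_eq_zero_iff Φ hlam.ne' _).2 ⟨hab, secondDiff_affine a b⟩)
  · intro h k hk
    obtain ⟨hΦ, hD⟩ := (ltvOperator_eq_zero_iff Φ hlam.ne' k).1 hk
    obtain ⟨a, b, rfl⟩ := (secondDiff_eq_zero_iff hT2 k).1 hD
    exact (affine_eq_zero_iff hT2 a b).2 (h a b hΦ)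
end
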